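/- For every graph G with at least one edge and every integer d ≥ 1, the d-fold cartesian product G^d = G □ G □ ⋯ □ G (d factors) satisfies ddn(G^d) = ddn(G) and dn(G^d) = dn(G). -/

import Mathlib

noncomputable section

/-- The Euclidean plane. -/
abbrev Plane : Type := EuclideanSpace ℝ (Fin 2)

/-- The set of edge-lengths determined by a map `f` of the vertices of `G` to the plane. -/
def SimpleGraph.edgeLengths {V : Type*} (G : SimpleGraph V) (f : V → Plane) : Set ℝ :=
  {d : ℝ | ∃ u v : V, G.Adj u v ∧ Dist.dist (f u) (f v) = d}

/-- A degenerate drawing of `G`: an injective map from the vertices to the plane. -/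
def SimpleGraph.IsDegenDrawing {V : Type*} (_G : SimpleGraph V) (f : V → Plane) : Prop :=
  Function.Injective f

/-- A drawing of `G`: a degenerate drawing such that no vertex lies on the open segment
representing an edge. -/
def SimpleGraph.IsDrawing {V : Type*} (G : SimpleGraph V) (f : V → Plane) : Prop :=
  Function.Injective f ∧ ∀ u v w : V, G.Adj u v → f w ∉ openSegment ℝ (f u) (f v)

/-- The degenerate distance-number of `G`: the minimum number of distinct edge-lengths
in a degenerate drawing of `G`. -/
def SimpleGraph.ddn {V : Type*} (G : SimpleGraph V) : ℕ :=
  sInf {k : ℕ | ∃ f : V → Plane, G.IsDegenDrawing f ∧ (G.edgeLengths f).ncard = k}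

/-- The distance-number of `G`: the minimum number of distinct edge-lengths
in a drawing of `G`. -/
def SimpleGraph.dn {V : Type*} (G : SimpleGraph V) : ℕ :=
  sInf {k : ℕ | ∃ f : V → Plane, G.IsDrawing f ∧ (G.edgeLengths f).ncard = k}

/-- The `d`-fold cartesian product `G^d = G □ G □ ⋯ □ G`: vertices are `d`-tuples of
vertices of `G`; two tuples are adjacent iff they agree in all but one coordinate, in
which they are adjacent in `G`. -/
def SimpleGraph.boxPow {V : Type*} (G : SimpleGraph V) (d : ℕ) :
    SimpleGraph (Fin d → V) where
  Adj f g := ∃ i : Fin d, G.Adj (f i) (g i) ∧ ∀ j : Fin d, j ≠ i → f j = g j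
  symm := by
    constructor
    rintro f g ⟨i, hadj, heq⟩
    exact ⟨i, hadj.symm, fun j hj => (heq j hj).symm⟩
  loopless := by
    constructor
    rintro f ⟨i, hadj, -⟩
    exact G.loopless.irrefl _ hadj


/-!
`G` embeds into `G^d` (fix all but one coordinate), and a drawing of `G^d` restricts to one of
`G` without new edge lengths, so neither number can drop. Conversely, given drawings `f` of `G`
and `g` of `H`, placing `(v, w)` at `f v + ρ (g w)` for a rotation `ρ` draws `G □ H` with only
the edge lengths of `f` and `g`. Two vertices coincide, or a vertex lies on an edge, only if `ρ`
sends one of finitely many nonzero vectors into one of finitely many sets `segment ∩ circle`,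
each of at most two points; so all but finitely many rotations work. Iterating along
`G^(d+1) ≃ G □ G^d` draws `G^d` with the edge lengths of `G`.
-/

open Function

section Segments

variable {E : Type*} [NormedAddCommGroup E] [InnerProductSpace ℝ E]

open Polynomial in
theorem finite_setOf_norm_add_smul_eq {a b : E} (hb : b ≠ 0) (r : ℝ) :
    {t : ℝ | ‖a + t • b‖ = r}.Finite := by
  set p : ℝ[X] := C (‖b‖ ^ 2) * X ^ 2 + C (2 * inner ℝ a b) * X + C (‖a‖ ^ 2 - r ^ 2)
  have hp : p ≠ 0 := fun h => hb <| by
    have h2 := congrArg (coeff · 2) h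
    simp only [p, coeff_add, coeff_C_mul, coeff_X_pow, coeff_X, coeff_C] at h2
    norm_num at h2
    exact h2
  refine (finite_setOfPred_isRoot hp).subset fun t (ht : ‖a + t • b‖ = r) => ?_
  have hsq := norm_add_sq_real a (t • b)
  rw [ht, norm_smul, real_inner_smul_right, Real.norm_eq_abs, mul_pow, sq_abs] at hsq
  simp only [Set.mem_ofPred_eq, IsRoot, p, eval_add, eval_mul, eval_C, eval_pow, eval_X]
  linear_combination -hsq

theorem finite_openSegment_inter_sphere (x y c : E) (r : ℝ) :
    (openSegment ℝ x y ∩ Metric.sphere c r).Finite := by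
  rcases eq_or_ne x y with rfl | hxy
  · rw [openSegment_same]
    exact (Set.finite_singleton x).subset Set.inter_subset_left
  refine ((finite_setOf_norm_add_smul_eq (a := x - c) (sub_ne_zero.2 hxy.symm) r).image
    fun t => x + t • (y - x)).subset ?_
  rintro _ ⟨hp, hr⟩
  rw [openSegment_eq_image'] at hp
  obtain ⟨t, -, rfl⟩ := hp
  refine ⟨t, ?_, rfl⟩
  rw [mem_sphere_iff_norm] at hr
  simpa [sub_add_eq_add_sub] using hr

end Segments

theorem sub_mem_openSegment_sub {E : Type*} [AddCommGroup E] [Module ℝ E] {x a b : E} (c : E)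
    (h : x ∈ openSegment ℝ a b) :
    x - c ∈ openSegment ℝ (a - c) (b - c) := by
  simpa [sub_eq_neg_add] using (mem_openSegment_translate ℝ (-c)).2 h

theorem LinearIsometryEquiv.apply_mem_openSegment_iff {E F : Type*} [NormedAddCommGroup E]
    [NormedSpace ℝ E] [NormedAddCommGroup F] [NormedSpace ℝ F] (ρ : E ≃ₗᵢ[ℝ] F) {x a b : E} :
    ρ x ∈ openSegment ℝ (ρ a) (ρ b) ↔ x ∈ openSegment ℝ a b := by
  have h := image_openSegment ℝ ρ.toLinearEquiv.toLinearMap.toAffineMap a b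
  simp only [LinearMap.coe_toAffineMap, LinearEquiv.coe_coe,
    LinearIsometryEquiv.coe_toLinearEquiv] at h
  rw [← h, ρ.injective.mem_set_image]

instance : Infinite Circle :=
  Set.infinite_univ_iff.mp <| ((Set.Ico_infinite Real.two_pi_pos).image
    (Circle.exp_injOn_Ico (by rw [sub_zero]))).mono (Set.subset_univ _)

def planeRotation (z : Circle) : Plane ≃ₗᵢ[ℝ] Plane :=
  (Complex.orthonormalBasisOneI.repr.symm.trans (rotation z)).trans
    Complex.orthonormalBasisOneI.repr

theorem planeRotation_symm (z : Circle) : (planeRotation z).symm = planeRotation z⁻¹ := by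
  ext1 x
  simp [planeRotation]

theorem planeRotation_apply_injective {a : Plane} (ha : a ≠ 0) :
    Injective fun z : Circle => planeRotation z a := by
  intro z z' h
  set e := Complex.orthonormalBasisOneI.repr
  have ha' : e.symm a ≠ 0 := (LinearEquiv.map_ne_zero_iff e.symm.toLinearEquiv).2 ha
  have h' : (z : ℂ) * e.symm a = z' * e.symm a := by
    simpa only [planeRotation, LinearIsometryEquiv.trans_apply, rotation_apply,
      EmbeddingLike.apply_eq_iff_eq] using h
  exact Circle.ext (mul_right_cancel₀ ha' h')

theorem finite_setOf_planeRotation_mem_openSegment (a x y : Plane) :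
    {z : Circle | a ≠ 0 ∧ planeRotation z a ∈ openSegment ℝ x y}.Finite := by
  rcases eq_or_ne a 0 with rfl | ha
  · simp
  refine ((finite_openSegment_inter_sphere x y 0 ‖a‖).preimage
    (planeRotation_apply_injective ha).injOn).subset fun z hz => ⟨hz.2, ?_⟩
  simp

section BoxDrawing

variable {V W : Type*}

/-- Since `openSegment ℝ c c = {c}`, this also rules out `f v + ρ (g w) = f v' + ρ (g w')` for
`g w ≠ g w'`. -/
def AvoidsSegments (ρ : Plane ≃ₗᵢ[ℝ] Plane) (f : V → Plane) (g : W → Plane) : Prop :=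
  ∀ w w', g w ≠ g w' → ∀ v₁ v₂ v₃, ρ (g w - g w') ∉ openSegment ℝ (f v₁ - f v₃) (f v₂ - f v₃)

theorem finite_setOf_not_avoidsSegments [Finite V] [Finite W] (f : V → Plane) (g : W → Plane) :
    {z : Circle | ¬AvoidsSegments (planeRotation z) f g}.Finite := by
  refine (Set.finite_iUnion fun p : W × W × V × V × V =>
    finite_setOf_planeRotation_mem_openSegment (g p.1 - g p.2.1)
      (f p.2.2.1 - f p.2.2.2.2) (f p.2.2.2.1 - f p.2.2.2.2)).subset fun z hz => ?_
  simp only [AvoidsSegments, not_forall, not_not] at hz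
  obtain ⟨w, w', hww', v₁, v₂, v₃, hz⟩ := hz
  exact Set.mem_iUnion.2 ⟨(w, w', v₁, v₂, v₃), sub_ne_zero.2 hww', hz⟩

theorem exists_avoidsSegments [Finite V] [Finite W] (f : V → Plane) (g : W → Plane) :
    ∃ ρ : Plane ≃ₗᵢ[ℝ] Plane, AvoidsSegments ρ f g ∧ AvoidsSegments ρ.symm g f := by
  have hbad := (finite_setOf_not_avoidsSegments f g).union
    ((finite_setOf_not_avoidsSegments g f).preimage inv_injective.injOn)
  obtain ⟨z, hz⟩ := hbad.infinite_compl.nonempty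
  simp only [Set.mem_compl_iff, Set.mem_union, Set.mem_ofPred_eq, Set.mem_preimage,
    not_or, not_not] at hz
  exact ⟨planeRotation z, hz.1, by rw [planeRotation_symm]; exact hz.2⟩

def boxDrawing (ρ : Plane ≃ₗᵢ[ℝ] Plane) (f : V → Plane) (g : W → Plane) : V × W → Plane :=
  fun x => f x.1 + ρ (g x.2)

variable {ρ : Plane ≃ₗᵢ[ℝ] Plane} {f : V → Plane} {g : W → Plane}

theorem edgeLengths_boxDrawing_subset (G : SimpleGraph V) (H : SimpleGraph W) :
    (G □ H).edgeLengths (boxDrawing ρ f g) ⊆ G.edgeLengths f ∪ H.edgeLengths g := by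
  rintro _ ⟨⟨v, w⟩, ⟨v', w'⟩, hadj | hadj, rfl⟩ <;> obtain ⟨hadj, ⟨⟩⟩ := hadj
  · exact Or.inl ⟨v, v', hadj, (dist_add_right _ _ _).symm⟩
  · exact Or.inr ⟨w, w', hadj, by simp [boxDrawing]⟩

theorem injective_boxDrawing (hf : Injective f) (hg : Injective g) (hρ : AvoidsSegments ρ f g) :
    Injective (boxDrawing ρ f g) := by
  rintro ⟨v, w⟩ ⟨v', w'⟩ h
  have hw : g w = g w' := by
    by_contra hne
    refine hρ w w' hne v' v' v ?_
    rw [openSegment_same, Set.mem_singleton_iff, map_sub]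
    simp only [boxDrawing] at h
    linear_combination (norm := module) h
  simp only [boxDrawing, hw, add_left_inj] at h
  rw [hf h, hg hw]

theorem isDrawing_boxDrawing {G : SimpleGraph V} {H : SimpleGraph W} (hf : G.IsDrawing f)
    (hg : H.IsDrawing g) (hfg : AvoidsSegments ρ f g) (hgf : AvoidsSegments ρ.symm g f) :
    (G □ H).IsDrawing (boxDrawing ρ f g) := by
  refine ⟨injective_boxDrawing hf.1 hg.1 hfg, ?_⟩
  rintro ⟨v₁, w₁⟩ ⟨v₂, w₂⟩ ⟨v₃, w₃⟩ (⟨hadj, ⟨⟩⟩ | ⟨hadj, ⟨⟩⟩) hmem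
  · by_cases hw : g w₃ = g w₁
    · refine hf.2 v₁ v₂ v₃ hadj ?_
      simpa [boxDrawing, hw] using sub_mem_openSegment_sub (ρ (g w₁)) hmem
    · refine hfg w₃ w₁ hw v₁ v₂ v₃ ?_
      simpa [boxDrawing] using sub_mem_openSegment_sub (f v₃ + ρ (g w₁)) hmem
  · by_cases hv : f v₃ = f v₁
    · refine hg.2 w₁ w₂ w₃ hadj ?_
      rw [← ρ.apply_mem_openSegment_iff]
      simpa [boxDrawing, hv] using sub_mem_openSegment_sub (f v₁) hmem
    · refine hgf v₃ v₁ hv w₁ w₂ w₃ ?_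
      rw [← ρ.apply_mem_openSegment_iff, LinearIsometryEquiv.apply_symm_apply]
      simpa [boxDrawing] using sub_mem_openSegment_sub (f v₁ + ρ (g w₃)) hmem

end BoxDrawing

def boxPowDrawing {V : Type*} [Finite V] (f : V → Plane) : (d : ℕ) → (Fin d → V) → Plane
  | 0 => fun _ => 0
  | d + 1 =>
    boxDrawing (exists_avoidsSegments f (boxPowDrawing f d)).choose f (boxPowDrawing f d) ∘
      (Fin.consEquiv fun _ => V).symm

namespace SimpleGraph

variable {V V' : Type*} {G : SimpleGraph V} {G' : SimpleGraph V'}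

theorem finite_edgeLengths [Finite V] (G : SimpleGraph V) (f : V → Plane) :
    (G.edgeLengths f).Finite :=
  (Set.finite_range fun p : V × V => Dist.dist (f p.1) (f p.2)).subset
    fun _ ⟨u, v, _, h⟩ => ⟨(u, v), h⟩

theorem edgeLengths_comp_subset (φ : G →g G') (f : V' → Plane) :
    G.edgeLengths (f ∘ φ) ⊆ G'.edgeLengths f :=
  fun _ ⟨u, v, hadj, h⟩ => ⟨φ u, φ v, φ.map_adj hadj, h⟩

theorem IsDrawing.comp {f : V' → Plane} (hf : G'.IsDrawing f) (φ : G ↪g G') :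
    G.IsDrawing (f ∘ φ) :=
  ⟨hf.1.comp φ.injective, fun u v w hadj => hf.2 (φ u) (φ v) (φ w) (φ.map_adj_iff.2 hadj)⟩

theorem exists_isDrawing [Finite V] (G : SimpleGraph V) : ∃ f : V → Plane, G.IsDrawing f := by
  obtain ⟨a, ha⟩ := exists_ne (0 : Plane)
  obtain ⟨ι, hι⟩ := exists_injective_nat V
  set f : V → Plane := fun v => planeRotation (Infinite.natEmbedding Circle (ι v)) a
  have hf : Injective f :=
    (planeRotation_apply_injective ha).comp ((Infinite.natEmbedding Circle).injective.comp hι)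
  have hnorm : ∀ v, ‖f v‖ = ‖a‖ := fun v => LinearIsometryEquiv.norm_map _ a
  refine ⟨f, hf, fun u v w hadj hw => (hnorm w).not_lt ?_⟩
  rw [← mem_ball_zero_iff]
  exact openSegment_subset_ball_of_ne (mem_closedBall_zero_iff.2 (hnorm u).le)
    (mem_closedBall_zero_iff.2 (hnorm v).le) (hf.ne hadj.ne) hw

theorem ddn_le_ncard {f : V → Plane} (hf : G.IsDegenDrawing f) :
    G.ddn ≤ (G.edgeLengths f).ncard :=
  Nat.sInf_le ⟨f, hf, rfl⟩

theorem dn_le_ncard {f : V → Plane} (hf : G.IsDrawing f) : G.dn ≤ (G.edgeLengths f).ncard :=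
  Nat.sInf_le ⟨f, hf, rfl⟩

theorem exists_isDegenDrawing_ncard_eq_ddn [Finite V] (G : SimpleGraph V) :
    ∃ f, G.IsDegenDrawing f ∧ (G.edgeLengths f).ncard = G.ddn := by
  obtain ⟨f, hf⟩ := G.exists_isDrawing
  exact Nat.sInf_mem (s := {k | ∃ f, G.IsDegenDrawing f ∧ (G.edgeLengths f).ncard = k})
    ⟨_, f, hf.1, rfl⟩

theorem exists_isDrawing_ncard_eq_dn [Finite V] (G : SimpleGraph V) :
    ∃ f, G.IsDrawing f ∧ (G.edgeLengths f).ncard = G.dn := by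
  obtain ⟨f, hf⟩ := G.exists_isDrawing
  exact Nat.sInf_mem (s := {k | ∃ f, G.IsDrawing f ∧ (G.edgeLengths f).ncard = k})
    ⟨_, f, hf, rfl⟩

theorem ddn_le_of_embedding [Finite V'] (φ : G ↪g G') : G.ddn ≤ G'.ddn := by
  obtain ⟨f, hf, hcard⟩ := G'.exists_isDegenDrawing_ncard_eq_ddn
  calc G.ddn ≤ (G.edgeLengths (f ∘ φ)).ncard := ddn_le_ncard (hf.comp φ.injective)
    _ ≤ (G'.edgeLengths f).ncard :=
      Set.ncard_le_ncard (edgeLengths_comp_subset φ.toHom f) (G'.finite_edgeLengths f)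
    _ = G'.ddn := hcard

theorem dn_le_of_embedding [Finite V'] (φ : G ↪g G') : G.dn ≤ G'.dn := by
  obtain ⟨f, hf, hcard⟩ := G'.exists_isDrawing_ncard_eq_dn
  calc G.dn ≤ (G.edgeLengths (f ∘ φ)).ncard := dn_le_ncard (hf.comp φ)
    _ ≤ (G'.edgeLengths f).ncard :=
      Set.ncard_le_ncard (edgeLengths_comp_subset φ.toHom f) (G'.finite_edgeLengths f)
    _ = G'.dn := hcard

def boxPowSuccIso (G : SimpleGraph V) (d : ℕ) : G.boxPow (d + 1) ≃g G □ G.boxPow d where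
  toEquiv := (Fin.consEquiv fun _ => V).symm
  map_rel_iff' {x y} := by
    simp only [Fin.consEquiv_symm_apply, boxProd_adj]
    constructor
    · rintro (⟨h, ht⟩ | ⟨⟨i, h, hi⟩, h0⟩)
      · refine ⟨0, h, fun j hj => ?_⟩
        obtain ⟨j, rfl⟩ := Fin.exists_succ_eq.2 hj
        exact congrFun ht j
      · refine ⟨i.succ, h, Fin.cases (fun _ => h0) fun j hj => hi j ?_⟩
        exact fun e => hj (e ▸ rfl)
    · rintro ⟨i, h, hi⟩
      induction i using Fin.cases with
      | zero => exact Or.inl ⟨h, funext fun j => hi j.succ (Fin.succ_ne_zero j)⟩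
      | succ i =>
        exact Or.inr ⟨⟨i, h, fun j hj => hi j.succ (Fin.succ_injective _ |>.ne hj)⟩,
          hi 0 (Fin.succ_ne_zero i).symm⟩

section BoxPow

variable [Finite V]

theorem edgeLengths_boxPowDrawing_subset (G : SimpleGraph V) (f : V → Plane) :
    ∀ d, (G.boxPow d).edgeLengths (boxPowDrawing f d) ⊆ G.edgeLengths f
  | 0 => fun _ ⟨_, _, ⟨i, _⟩, _⟩ => i.elim0
  | d + 1 => calc
      _ ⊆ (G □ G.boxPow d).edgeLengths (boxDrawing _ f (boxPowDrawing f d)) :=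
        edgeLengths_comp_subset (boxPowSuccIso G d).toEmbedding.toHom _
      _ ⊆ G.edgeLengths f ∪ (G.boxPow d).edgeLengths (boxPowDrawing f d) :=
        edgeLengths_boxDrawing_subset G (G.boxPow d)
      _ ⊆ G.edgeLengths f := Set.union_subset le_rfl (edgeLengths_boxPowDrawing_subset G f d)

theorem injective_boxPowDrawing {f : V → Plane} (hf : Injective f) :
    ∀ d, Injective (boxPowDrawing f d)
  | 0 => injective_of_subsingleton _
  | d + 1 => (injective_boxDrawing hf (injective_boxPowDrawing hf d)
      (exists_avoidsSegments f _).choose_spec.1).comp (Fin.consEquiv _).symm.injective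

theorem isDrawing_boxPowDrawing {f : V → Plane} (hf : G.IsDrawing f) :
    ∀ d, (G.boxPow d).IsDrawing (boxPowDrawing f d)
  | 0 => ⟨injective_of_subsingleton _, fun _ _ _ ⟨i, _⟩ => i.elim0⟩
  | d + 1 =>
    have hρ := (exists_avoidsSegments f (boxPowDrawing f d)).choose_spec
    (isDrawing_boxDrawing hf (isDrawing_boxPowDrawing hf d) hρ.1 hρ.2).comp
      (boxPowSuccIso G d).toEmbedding

theorem ddn_boxPow_le (G : SimpleGraph V) (d : ℕ) : (G.boxPow d).ddn ≤ G.ddn := by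
  obtain ⟨f, hf, hcard⟩ := G.exists_isDegenDrawing_ncard_eq_ddn
  calc (G.boxPow d).ddn ≤ ((G.boxPow d).edgeLengths (boxPowDrawing f d)).ncard :=
        ddn_le_ncard (injective_boxPowDrawing hf d)
    _ ≤ (G.edgeLengths f).ncard :=
        Set.ncard_le_ncard (G.edgeLengths_boxPowDrawing_subset f d) (G.finite_edgeLengths f)
    _ = G.ddn := hcard

theorem dn_boxPow_le (G : SimpleGraph V) (d : ℕ) : (G.boxPow d).dn ≤ G.dn := by
  obtain ⟨f, hf, hcard⟩ := G.exists_isDrawing_ncard_eq_dn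
  calc (G.boxPow d).dn ≤ ((G.boxPow d).edgeLengths (boxPowDrawing f d)).ncard :=
        dn_le_ncard (isDrawing_boxPowDrawing hf d)
    _ ≤ (G.edgeLengths f).ncard :=
        Set.ncard_le_ncard (G.edgeLengths_boxPowDrawing_subset f d) (G.finite_edgeLengths f)
    _ = G.dn := hcard

end BoxPow

end SimpleGraph

/-- For every graph `G` with at least one edge and every `d ≥ 1`,
`ddn (G^d) = ddn G` and `dn (G^d) = dn G`. -/
theorem stmt19 {V : Type*} [Fintype V] (G : SimpleGraph V)
    (hG : G.edgeSet.Nonempty) (d : ℕ) (hd : 1 ≤ d) :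
    (G.boxPow d).ddn = G.ddn ∧ (G.boxPow d).dn = G.dn := by
  obtain ⟨n, rfl⟩ := Nat.exists_eq_add_of_le' hd
  obtain ⟨⟨u, -⟩, -⟩ := hG
  let φ : G ↪g G.boxPow (n + 1) :=
    (SimpleGraph.boxProdLeft G (G.boxPow n) fun _ => u).trans (G.boxPowSuccIso n).symm.toEmbedding
  exact ⟨(G.ddn_boxPow_le _).antisymm (G.ddn_le_of_embedding φ),
    (G.dn_boxPow_le _).antisymm (G.dn_le_of_embedding φ)⟩
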